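/- Let T > 0, γ, M ∈ ℝ, and let B : (0,T)×ℝ² → ℝ, v_S, v_L : (0,T)×ℝ² → ℝ², P : (0,T)×ℝ² → ℝ and Γ_B : (0,T)×ℝ² → ℝ be C³ functions with 0 < B < 1 everywhere, satisfying on (0,T)×ℝ²: ∂ₜB + ∇·(B v_S) = Γ_B; ∂ₜv_S + (v_S·∇)v_S + γ∇B/B + ∇P = (M+Γ_B)(v_L−v_S)/B; ∂ₜv_L + (v_L·∇)v_L + ∇P = M(v_S−v_L)/(1−B); and ∇·(B v_S + (1−B) v_L) = 0. Then, with w := B v_S + (1−B) v_L and z := v_S − v_L, the pressure P satisfies the elliptic equation ΔP = − Σ_{i,j=1}^{2} ∂_{x_j}w_i · ∂_{x_i}w_j − Σ_{i,j=1}^{2} ∂_{x_i}∂_{x_j}(B(1−B) z_i z_j) − γΔB on (0,T)×ℝ². -/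

import Mathlib

/-- Partial derivative in the time variable `t` of a function on `(t, x₁, x₂)`-space. -/
noncomputable def pdt (f : ℝ × ℝ × ℝ → ℝ) (p : ℝ × ℝ × ℝ) : ℝ :=
  fderiv ℝ f p (1, 0, 0)

/-- Partial derivative in the first spatial variable `x₁`. -/
noncomputable def pdx (f : ℝ × ℝ × ℝ → ℝ) (p : ℝ × ℝ × ℝ) : ℝ :=
  fderiv ℝ f p (0, 1, 0)

/-- Partial derivative in the second spatial variable `x₂`. -/
noncomputable def pdy (f : ℝ × ℝ × ℝ → ℝ) (p : ℝ × ℝ × ℝ) : ℝ :=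
  fderiv ℝ f p (0, 0, 1)

/-- The space-time domain `(0,T) × ℝ²`, viewed as a subset of `ℝ × ℝ × ℝ`. -/
def dom (T : ℝ) : Set (ℝ × ℝ × ℝ) := {p | 0 < p.1 ∧ p.1 < T}

/-
Multiplying the solid and liquid momentum equations by `B` and `1 - B` and adding, the mass
equation and `∇·w = 0` turn the sum into the conservative mixture momentum equation
`∂ₜw + ∇·(w ⊗ w + B(1-B) z ⊗ z) + γ∇B + ∇P = 0`. Its divergence gives the claim: `∂ₜ(∇·w)`
vanishes, and `∑ᵢⱼ ∂ᵢ∂ⱼ(wᵢwⱼ) = ∑ᵢⱼ ∂ⱼwᵢ ∂ᵢwⱼ` because `w` is divergence free near the point.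
-/

open Filter Topology

section

variable {E : Type*} [NormedAddCommGroup E] [NormedSpace ℝ E]

noncomputable def pd (v : E) (f : E → ℝ) (p : E) : ℝ := fderiv ℝ f p v

variable {f g : E → ℝ} {p : E}

theorem pd_add (v : E) (hf : DifferentiableAt ℝ f p) (hg : DifferentiableAt ℝ g p) :
    pd v (fun q => f q + g q) p = pd v f p + pd v g p := by
  simp [pd, fderiv_fun_add hf hg]

theorem pd_sub (v : E) (hf : DifferentiableAt ℝ f p) (hg : DifferentiableAt ℝ g p) :
    pd v (fun q => f q - g q) p = pd v f p - pd v g p := by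
  simp [pd, fderiv_fun_sub hf hg]

theorem pd_mul (v : E) (hf : DifferentiableAt ℝ f p) (hg : DifferentiableAt ℝ g p) :
    pd v (fun q => f q * g q) p = pd v f p * g p + f p * pd v g p := by
  simp [pd, fderiv_fun_mul hf hg]
  ring

theorem pd_const (v : E) (c : ℝ) : pd v (fun _ => c) p = 0 := by
  simp [pd]

theorem pd_const_mul (v : E) (c : ℝ) (hf : DifferentiableAt ℝ f p) :
    pd v (fun q => c * f q) p = c * pd v f p := by
  simp [pd, fderiv_const_mul hf]

theorem pd_eq_zero_of_eventually_eq_zero (v : E) (h : ∀ᶠ q in 𝓝 p, f q = 0) : pd v f p = 0 := by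
  have hf : f =ᶠ[𝓝 p] fun _ => 0 := h
  rw [pd, hf.fderiv_eq]
  simp

@[fun_prop]
theorem differentiableAt_pd (v : E) (hf : ContDiffAt ℝ 2 f p) :
    DifferentiableAt ℝ (pd v f) p :=
  ((hf.fderiv_right (m := 1) le_rfl).differentiableAt one_ne_zero).clm_apply
    (differentiableAt_const v)

theorem pd_pd_eq_fderiv_fderiv (u v : E) (hf : ContDiffAt ℝ 2 f p) :
    pd u (pd v f) p = fderiv ℝ (fderiv ℝ f) p u v := by
  have hdf := (hf.fderiv_right (m := 1) le_rfl).differentiableAt one_ne_zero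
  change fderiv ℝ (fun q => fderiv ℝ f q v) p u = _
  simp [fderiv_clm_apply hdf (differentiableAt_const v)]

theorem pd_comm (u v : E) (hf : ContDiffAt ℝ 2 f p) : pd u (pd v f) p = pd v (pd u f) p := by
  rw [pd_pd_eq_fderiv_fderiv u v hf, pd_pd_eq_fderiv_fderiv v u hf]
  exact hf.isSymmSndFDerivAt (by simp [minSmoothness_of_isRCLikeNormedField]) u v

theorem pd_pd_mul (u v : E) (hf : ContDiffAt ℝ 2 f p) (hg : ContDiffAt ℝ 2 g p) :
    pd u (pd v (fun q => f q * g q)) p =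
      pd u (pd v f) p * g p + pd v f p * pd u g p + pd u f p * pd v g p
        + f p * pd u (pd v g) p := by
  have hprod : pd v (fun q => f q * g q) =ᶠ[𝓝 p] fun q => pd v f q * g q + f q * pd v g q := by
    filter_upwards [hf.eventually (by simp), hg.eventually (by simp)] with q hfq hgq
    exact pd_mul v (hfq.differentiableAt two_ne_zero) (hgq.differentiableAt two_ne_zero)
  have hf1 := hf.differentiableAt two_ne_zero
  have hg1 := hg.differentiableAt two_ne_zero
  have hf' := differentiableAt_pd v hf
  have hg' := differentiableAt_pd v hg
  rw [pd, hprod.fderiv_eq, ← pd,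
    pd_add (f := fun q => pd v f q * g q) (g := fun q => f q * pd v g q) u (hf'.mul hg1)
      (hf1.mul hg'),
    pd_mul u hf' hg1, pd_mul u hf1 hg']
  ring

theorem pd_add_pd_eq_zero (v : E) (hf : DifferentiableAt ℝ f p) (hg : DifferentiableAt ℝ g p)
    (h : ∀ᶠ q in 𝓝 p, f q + g q = 0) : pd v f p + pd v g p = 0 := by
  rw [← pd_add v hf hg]
  exact pd_eq_zero_of_eventually_eq_zero v h

variable {x y : E} {w₁ w₂ : E → ℝ}

theorem sum_pd_pd_mul_of_div_eq_zero (hw₁ : ContDiffAt ℝ 2 w₁ p) (hw₂ : ContDiffAt ℝ 2 w₂ p)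
    (hdiv : ∀ᶠ q in 𝓝 p, pd x w₁ q + pd y w₂ q = 0) :
    pd x (pd x (fun q => w₁ q * w₁ q)) p + pd x (pd y (fun q => w₂ q * w₁ q)) p
      + pd y (pd x (fun q => w₁ q * w₂ q)) p + pd y (pd y (fun q => w₂ q * w₂ q)) p =
    pd x w₁ p * pd x w₁ p + pd y w₁ p * pd x w₂ p + pd x w₂ p * pd y w₁ p
      + pd y w₂ p * pd y w₂ p := by
  have hdiv_x := pd_add_pd_eq_zero x (differentiableAt_pd x hw₁) (differentiableAt_pd y hw₂) hdiv
  have hdiv_y := pd_add_pd_eq_zero y (differentiableAt_pd x hw₁) (differentiableAt_pd y hw₂) hdiv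
  rw [pd_pd_mul x x hw₁ hw₁, pd_pd_mul x y hw₂ hw₁, pd_pd_mul y x hw₁ hw₂,
    pd_pd_mul y y hw₂ hw₂, pd_comm x y hw₁, pd_comm y x hw₂]
  linear_combination (pd x w₁ p + pd y w₂ p) * hdiv.self_of_nhds + 2 * w₁ p * hdiv_x
    + 2 * w₂ p * hdiv_y

theorem laplacian_eq_of_conservative_momentum {t : E} {γ : ℝ} {K₁₁ K₁₂ K₂₁ K₂₂ B P : E → ℝ}
    (hw₁ : ContDiffAt ℝ 2 w₁ p) (hw₂ : ContDiffAt ℝ 2 w₂ p) (hK₁₁ : ContDiffAt ℝ 2 K₁₁ p)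
    (hK₁₂ : ContDiffAt ℝ 2 K₁₂ p) (hK₂₁ : ContDiffAt ℝ 2 K₂₁ p) (hK₂₂ : ContDiffAt ℝ 2 K₂₂ p)
    (hB : ContDiffAt ℝ 2 B p) (hP : ContDiffAt ℝ 2 P p)
    (hdiv : ∀ᶠ q in 𝓝 p, pd x w₁ q + pd y w₂ q = 0)
    (hmom₁ : ∀ᶠ q in 𝓝 p, pd t w₁ q + pd x (fun r => w₁ r * w₁ r) q
      + pd y (fun r => w₂ r * w₁ r) q + pd x K₁₁ q + pd y K₁₂ q + γ * pd x B q + pd x P q = 0)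
    (hmom₂ : ∀ᶠ q in 𝓝 p, pd t w₂ q + pd y (fun r => w₂ r * w₂ r) q
      + pd x (fun r => w₁ r * w₂ r) q + pd y K₂₂ q + pd x K₂₁ q + γ * pd y B q + pd y P q = 0) :
    pd x (pd x P) p + pd y (pd y P) p =
      -(pd x w₁ p * pd x w₁ p + pd y w₁ p * pd x w₂ p + pd x w₂ p * pd y w₁ p
          + pd y w₂ p * pd y w₂ p)
      - (pd x (pd x K₁₁) p + pd x (pd y K₁₂) p + pd y (pd x K₂₁) p + pd y (pd y K₂₂) p)
      - γ * (pd x (pd x B) p + pd y (pd y B) p) := by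
  have hdiv_t := pd_add_pd_eq_zero t (differentiableAt_pd x hw₁) (differentiableAt_pd y hw₂) hdiv
  rw [pd_comm t x hw₁, pd_comm t y hw₂] at hdiv_t
  have h₁ := pd_eq_zero_of_eventually_eq_zero x hmom₁
  have h₂ := pd_eq_zero_of_eventually_eq_zero y hmom₂
  simp (disch := fun_prop) only [pd_add, pd_const_mul] at h₁ h₂
  linear_combination h₁ + h₂ - hdiv_t - sum_pd_pd_mul_of_div_eq_zero hw₁ hw₂ hdiv

theorem mixture_momentum_conservative {t q : E} {γ M : ℝ} {B u₁ u₂ v₁ v₂ P Γ : E → ℝ}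
    (hB : DifferentiableAt ℝ B q) (hu₁ : DifferentiableAt ℝ u₁ q)
    (hu₂ : DifferentiableAt ℝ u₂ q) (hv₁ : DifferentiableAt ℝ v₁ q)
    (hv₂ : DifferentiableAt ℝ v₂ q) (hB₀ : B q ≠ 0) (hB₁ : 1 - B q ≠ 0)
    (hmass : pd t B q + pd x (fun r => B r * u₁ r) q + pd y (fun r => B r * u₂ r) q = Γ q)
    (hmomS : pd t u₁ q + (u₁ q * pd x u₁ q + u₂ q * pd y u₁ q) + γ * pd x B q / B q
      + pd x P q = (M + Γ q) * (v₁ q - u₁ q) / B q)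
    (hmomL : pd t v₁ q + (v₁ q * pd x v₁ q + v₂ q * pd y v₁ q) + pd x P q =
      M * (u₁ q - v₁ q) / (1 - B q))
    (hdiv : pd x (fun r => B r * u₁ r + (1 - B r) * v₁ r) q
      + pd y (fun r => B r * u₂ r + (1 - B r) * v₂ r) q = 0) :
    pd t (fun r => B r * u₁ r + (1 - B r) * v₁ r) q
      + pd x (fun r => (B r * u₁ r + (1 - B r) * v₁ r) * (B r * u₁ r + (1 - B r) * v₁ r)) q
      + pd y (fun r => (B r * u₂ r + (1 - B r) * v₂ r) * (B r * u₁ r + (1 - B r) * v₁ r)) q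
      + pd x (fun r => B r * (1 - B r) * (u₁ r - v₁ r) * (u₁ r - v₁ r)) q
      + pd y (fun r => B r * (1 - B r) * (u₁ r - v₁ r) * (u₂ r - v₂ r)) q
      + γ * pd x B q + pd x P q = 0 := by
  -- Weighted by `B` and `1 - B`, the drag terms add up to `Γ (v₁ - u₁)`, which the mass
  -- equation absorbs.
  field_simp at hmomS hmomL
  simp (disch := fun_prop) only [pd_mul, pd_add, pd_sub, pd_const] at hmass hdiv ⊢
  linear_combination hmomS + hmomL + (u₁ q - v₁ q) * hmass + v₁ q * hdiv

end

theorem pdt_eq_pd : pdt = pd (1, 0, 0) := rfl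

theorem pdx_eq_pd : pdx = pd (0, 1, 0) := rfl

theorem pdy_eq_pd : pdy = pd (0, 0, 1) := rfl

theorem isOpen_dom (T : ℝ) : IsOpen (dom T) :=
  isOpen_Ioo.preimage continuous_fst

theorem stmt9_general (T γ M : ℝ)
    (B vS1 vS2 vL1 vL2 P ΓB : ℝ × ℝ × ℝ → ℝ)
    (hBreg : ContDiffOn ℝ 3 B (dom T)) (hvS1 : ContDiffOn ℝ 3 vS1 (dom T))
    (hvS2 : ContDiffOn ℝ 3 vS2 (dom T)) (hvL1 : ContDiffOn ℝ 3 vL1 (dom T))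
    (hvL2 : ContDiffOn ℝ 3 vL2 (dom T)) (hP : ContDiffOn ℝ 3 P (dom T))
    (hB0 : ∀ p ∈ dom T, 0 < B p) (hB1 : ∀ p ∈ dom T, B p < 1)
    (hmass : ∀ p ∈ dom T,
      pdt B p + pdx (fun q => B q * vS1 q) p + pdy (fun q => B q * vS2 q) p = ΓB p)
    (hmomS1 : ∀ p ∈ dom T,
      pdt vS1 p + (vS1 p * pdx vS1 p + vS2 p * pdy vS1 p) + γ * pdx B p / B p + pdx P p =
        (M + ΓB p) * (vL1 p - vS1 p) / B p)
    (hmomS2 : ∀ p ∈ dom T,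
      pdt vS2 p + (vS1 p * pdx vS2 p + vS2 p * pdy vS2 p) + γ * pdy B p / B p + pdy P p =
        (M + ΓB p) * (vL2 p - vS2 p) / B p)
    (hmomL1 : ∀ p ∈ dom T,
      pdt vL1 p + (vL1 p * pdx vL1 p + vL2 p * pdy vL1 p) + pdx P p =
        M * (vS1 p - vL1 p) / (1 - B p))
    (hmomL2 : ∀ p ∈ dom T,
      pdt vL2 p + (vL1 p * pdx vL2 p + vL2 p * pdy vL2 p) + pdy P p =
        M * (vS2 p - vL2 p) / (1 - B p))
    (hdiv : ∀ p ∈ dom T,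
      pdx (fun q => B q * vS1 q + (1 - B q) * vL1 q) p +
        pdy (fun q => B q * vS2 q + (1 - B q) * vL2 q) p = 0)
    (w1 w2 z1 z2 : ℝ × ℝ × ℝ → ℝ)
    (hw1 : w1 = fun q => B q * vS1 q + (1 - B q) * vL1 q)
    (hw2 : w2 = fun q => B q * vS2 q + (1 - B q) * vL2 q)
    (hz1 : z1 = fun q => vS1 q - vL1 q) (hz2 : z2 = fun q => vS2 q - vL2 q) :
    ∀ p ∈ dom T,
      pdx (pdx P) p + pdy (pdy P) p =
        -(pdx w1 p * pdx w1 p + pdy w1 p * pdx w2 p +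
          pdx w2 p * pdy w1 p + pdy w2 p * pdy w2 p)
        - (pdx (pdx (fun q => B q * (1 - B q) * z1 q * z1 q)) p +
           pdx (pdy (fun q => B q * (1 - B q) * z1 q * z2 q)) p +
           pdy (pdx (fun q => B q * (1 - B q) * z2 q * z1 q)) p +
           pdy (pdy (fun q => B q * (1 - B q) * z2 q * z2 q)) p)
        - γ * (pdx (pdx B) p + pdy (pdy B) p) := by
  subst hw1 hw2 hz1 hz2
  simp only [pdt_eq_pd, pdx_eq_pd, pdy_eq_pd] at hmass hmomS1 hmomS2 hmomL1 hmomL2 hdiv ⊢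
  intro p hp
  have hU : ∀ᶠ q in 𝓝 p, q ∈ dom T := (isOpen_dom T).mem_nhds hp
  have hC : ∀ {f : ℝ × ℝ × ℝ → ℝ}, ContDiffOn ℝ 3 f (dom T) →
      ∀ q ∈ dom T, ContDiffAt ℝ 2 f q :=
    fun hf q hq => (hf.contDiffAt ((isOpen_dom T).mem_nhds hq)).of_le (by norm_num)
  have hD : ∀ {f : ℝ × ℝ × ℝ → ℝ}, ContDiffOn ℝ 3 f (dom T) →
      ∀ q ∈ dom T, DifferentiableAt ℝ f q :=
    fun hf q hq => (hC hf q hq).differentiableAt two_ne_zero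
  have hBp := hC hBreg p hp
  have hvS1p := hC hvS1 p hp
  have hvS2p := hC hvS2 p hp
  have hvL1p := hC hvL1 p hp
  have hvL2p := hC hvL2 p hp
  refine laplacian_eq_of_conservative_momentum (t := (1, 0, 0)) (by fun_prop) (by fun_prop)
    (by fun_prop) (by fun_prop) (by fun_prop) (by fun_prop) hBp (hC hP p hp)
    (hU.mono hdiv) (hU.mono fun q hq => ?_) (hU.mono fun q hq => ?_)
  · exact mixture_momentum_conservative (hD hBreg q hq) (hD hvS1 q hq) (hD hvS2 q hq)
      (hD hvL1 q hq) (hD hvL2 q hq) (hB0 q hq).ne' (sub_ne_zero.2 (hB1 q hq).ne') (hmass q hq)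
      (hmomS1 q hq) (hmomL1 q hq) (hdiv q hq)
  -- The `x₂`-equation is the `x₁`-equation with the two spatial coordinates exchanged.
  · exact mixture_momentum_conservative (M := M) (Γ := ΓB) (hD hBreg q hq) (hD hvS2 q hq)
      (hD hvS1 q hq) (hD hvL2 q hq) (hD hvL1 q hq) (hB0 q hq).ne' (sub_ne_zero.2 (hB1 q hq).ne')
      (by linear_combination hmass q hq) (by linear_combination hmomS2 q hq)
      (by linear_combination hmomL2 q hq) (by linear_combination hdiv q hq)

/-- If `(B, v_S, v_L, P)` is a `C³` solution of the two-phase system on `(0,T) × ℝ²`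
with `0 < B < 1`, then with `w := B v_S + (1−B) v_L` and `z := v_S − v_L`, the pressure
satisfies the elliptic equation
`ΔP = −Σ_{i,j} ∂_{x_j}w_i ∂_{x_i}w_j − Σ_{i,j} ∂_{x_i}∂_{x_j}(B(1−B) z_i z_j) − γΔB`. -/
theorem stmt9 (T γ M : ℝ) (hT : 0 < T)
    (B vS1 vS2 vL1 vL2 P ΓB : ℝ × ℝ × ℝ → ℝ)
    (hBreg : ContDiffOn ℝ 3 B (dom T)) (hvS1 : ContDiffOn ℝ 3 vS1 (dom T))
    (hvS2 : ContDiffOn ℝ 3 vS2 (dom T)) (hvL1 : ContDiffOn ℝ 3 vL1 (dom T))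
    (hvL2 : ContDiffOn ℝ 3 vL2 (dom T)) (hP : ContDiffOn ℝ 3 P (dom T))
    (hΓ : ContDiffOn ℝ 3 ΓB (dom T))
    (hB0 : ∀ p ∈ dom T, 0 < B p) (hB1 : ∀ p ∈ dom T, B p < 1)
    (hmass : ∀ p ∈ dom T,
      pdt B p + pdx (fun q => B q * vS1 q) p + pdy (fun q => B q * vS2 q) p = ΓB p)
    (hmomS1 : ∀ p ∈ dom T,
      pdt vS1 p + (vS1 p * pdx vS1 p + vS2 p * pdy vS1 p) + γ * pdx B p / B p + pdx P p =
        (M + ΓB p) * (vL1 p - vS1 p) / B p)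
    (hmomS2 : ∀ p ∈ dom T,
      pdt vS2 p + (vS1 p * pdx vS2 p + vS2 p * pdy vS2 p) + γ * pdy B p / B p + pdy P p =
        (M + ΓB p) * (vL2 p - vS2 p) / B p)
    (hmomL1 : ∀ p ∈ dom T,
      pdt vL1 p + (vL1 p * pdx vL1 p + vL2 p * pdy vL1 p) + pdx P p =
        M * (vS1 p - vL1 p) / (1 - B p))
    (hmomL2 : ∀ p ∈ dom T,
      pdt vL2 p + (vL1 p * pdx vL2 p + vL2 p * pdy vL2 p) + pdy P p =
        M * (vS2 p - vL2 p) / (1 - B p))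
    (hdiv : ∀ p ∈ dom T,
      pdx (fun q => B q * vS1 q + (1 - B q) * vL1 q) p +
        pdy (fun q => B q * vS2 q + (1 - B q) * vL2 q) p = 0)
    (w1 w2 z1 z2 : ℝ × ℝ × ℝ → ℝ)
    (hw1 : w1 = fun q => B q * vS1 q + (1 - B q) * vL1 q)
    (hw2 : w2 = fun q => B q * vS2 q + (1 - B q) * vL2 q)
    (hz1 : z1 = fun q => vS1 q - vL1 q) (hz2 : z2 = fun q => vS2 q - vL2 q) :
    ∀ p ∈ dom T,
      pdx (pdx P) p + pdy (pdy P) p =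
        -(pdx w1 p * pdx w1 p + pdy w1 p * pdx w2 p +
          pdx w2 p * pdy w1 p + pdy w2 p * pdy w2 p)
        - (pdx (pdx (fun q => B q * (1 - B q) * z1 q * z1 q)) p +
           pdx (pdy (fun q => B q * (1 - B q) * z1 q * z2 q)) p +
           pdy (pdx (fun q => B q * (1 - B q) * z2 q * z1 q)) p +
           pdy (pdy (fun q => B q * (1 - B q) * z2 q * z2 q)) p)
        - γ * (pdx (pdx B) p + pdy (pdy B) p) :=
  stmt9_general T γ M B vS1 vS2 vL1 vL2 P ΓB hBreg hvS1 hvS2 hvL1 hvL2 hP hB0 hB1 hmass hmomS1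
    hmomS2 hmomL1 hmomL2 hdiv w1 w2 z1 z2 hw1 hw2 hz1 hz2
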